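/- arXiv:1910.05105 — 4 statements merged into one kernel-verified Lean document; each statement's English description precedes it below -/
import Mathlib

section
/- For positive measures μ₁, μ₂, ν₁, ν₂ of finite mass on ℝ^d, the generalized Wasserstein distance is subadditive: W₁^{a,b}(μ₁ + μ₂, ν₁ + ν₂) ≤ W₁^{a,b}(μ₁, ν₁) + W₁^{a,b}(μ₂, ν₂). -/
open MeasureTheory ENNReal Filter

noncomputable section

variable {X : Type*} [MeasurableSpace X] [MetricSpace X]

/-- Classical 1-Wasserstein "distance" as infimum over couplings (`⊤` if no coupling). -/
def W1 (μ ν : Measure X) : ℝ≥0∞ :=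
  ⨅ (π : Measure (X × X)) (_ : π.map Prod.fst = μ ∧ π.map Prod.snd = ν),
    ∫⁻ p, edist p.1 p.2 ∂π

/-- Total-variation mass `|μ - ν|` of the difference of two positive measures. -/
def tvMass (μ ν : Measure X) : ℝ≥0∞ :=
  (μ Set.univ + ν Set.univ) - 2 * (μ ⊓ ν) Set.univ

/-- Generalized Wasserstein distance `W₁^{a,b}` on positive measures. -/
def genW (a b : ℝ) (μ ν : Measure X) : ℝ≥0∞ :=
  ⨅ (μ' : Measure X) (ν' : Measure X) (_ : μ' Set.univ = ν' Set.univ),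
    (ENNReal.ofReal a * (tvMass μ μ' + tvMass ν ν') + ENNReal.ofReal b * W1 μ' ν')

/-- Signed generalized Wasserstein distance `𝕎₁^{a,b}`. -/
def sW (a b : ℝ) (μ ν : SignedMeasure X) : ℝ≥0∞ :=
  genW a b (μ.toJordanDecomposition.posPart + ν.toJordanDecomposition.negPart)
           (μ.toJordanDecomposition.negPart + ν.toJordanDecomposition.posPart)

/-- The generalized Wasserstein norm `‖μ‖^{a,b}` on signed measures. -/
def sNorm (a b : ℝ) (μ : SignedMeasure X) : ℝ≥0∞ :=
  genW a b μ.toJordanDecomposition.posPart μ.toJordanDecomposition.negPart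

abbrev Euc (d : ℕ) := EuclideanSpace ℝ (Fin d)

end

/-!
Every ingredient of `W₁^{a,b}` is subadditive under adding the data: the sums `μ₁' + μ₂'`,
`ν₁' + ν₂'` of admissible intermediate measures are admissible for the summed problem, the sum of
two couplings couples the sums, and `|μ₁ + μ₂ - (ν₁ + ν₂)| ≤ |μ₁ - ν₁| + |μ₂ - ν₂|` because
`(μ₁ ⊓ ν₁) + (μ₂ ⊓ ν₂) ≤ (μ₁ + μ₂) ⊓ (ν₁ + ν₂)`.
-/

variable {X : Type*} [MeasurableSpace X]

lemma tvMass_add_le (μ₁ μ₂ ν₁ ν₂ : Measure X) :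
    tvMass (μ₁ + μ₂) (ν₁ + ν₂) ≤ tvMass μ₁ ν₁ + tvMass μ₂ ν₂ := by
  have hinf : (μ₁ ⊓ ν₁) + (μ₂ ⊓ ν₂) ≤ (μ₁ + μ₂) ⊓ (ν₁ + ν₂) :=
    le_inf (add_le_add inf_le_left inf_le_left) (add_le_add inf_le_right inf_le_right)
  have hinf_univ :
      (μ₁ ⊓ ν₁) Set.univ + (μ₂ ⊓ ν₂) Set.univ ≤ ((μ₁ + μ₂) ⊓ (ν₁ + ν₂)) Set.univ := by
    simpa using Measure.le_iff'.1 hinf Set.univ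
  calc tvMass (μ₁ + μ₂) (ν₁ + ν₂)
      ≤ ((μ₁ + μ₂) Set.univ + (ν₁ + ν₂) Set.univ)
        - 2 * ((μ₁ ⊓ ν₁) Set.univ + (μ₂ ⊓ ν₂) Set.univ) :=
        tsub_le_tsub_left (mul_le_mul' le_rfl hinf_univ) _
    _ = (μ₁ Set.univ + ν₁ Set.univ) + (μ₂ Set.univ + ν₂ Set.univ)
        - (2 * (μ₁ ⊓ ν₁) Set.univ + 2 * (μ₂ ⊓ ν₂) Set.univ) := by
        simp only [Measure.add_apply]; ring_nf
    _ ≤ tvMass μ₁ ν₁ + tvMass μ₂ ν₂ := add_tsub_add_le_tsub_add_tsub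

variable [MetricSpace X]

lemma W1_add_le (μ₁ μ₂ ν₁ ν₂ : Measure X) :
    W1 (μ₁ + μ₂) (ν₁ + ν₂) ≤ W1 μ₁ ν₁ + W1 μ₂ ν₂ := by
  conv_rhs => rw [W1, W1]
  simp_rw [ENNReal.iInf_add, ENNReal.add_iInf]
  refine le_iInf fun π₁ => le_iInf fun h₁ => le_iInf fun π₂ => le_iInf fun h₂ => ?_
  have hcoupling : (π₁ + π₂).map Prod.fst = μ₁ + μ₂ ∧ (π₁ + π₂).map Prod.snd = ν₁ + ν₂ :=
    ⟨by rw [Measure.map_add _ _ measurable_fst, h₁.1, h₂.1],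
      by rw [Measure.map_add _ _ measurable_snd, h₁.2, h₂.2]⟩
  exact (iInf₂_le (π₁ + π₂) hcoupling).trans_eq (lintegral_add_measure _ _ _)

lemma genW_add_le (a b : ℝ) (μ₁ μ₂ ν₁ ν₂ : Measure X) :
    genW a b (μ₁ + μ₂) (ν₁ + ν₂) ≤ genW a b μ₁ ν₁ + genW a b μ₂ ν₂ := by
  conv_rhs => rw [genW, genW]
  simp_rw [ENNReal.iInf_add, ENNReal.add_iInf]
  refine le_iInf fun μ₁' => le_iInf fun ν₁' => le_iInf fun h₁ =>
    le_iInf fun μ₂' => le_iInf fun ν₂' => le_iInf fun h₂ => ?_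
  have hmass : (μ₁' + μ₂') Set.univ = (ν₁' + ν₂') Set.univ := by
    simp [Measure.add_apply, h₁, h₂]
  refine (iInf_le_of_le (μ₁' + μ₂') (iInf_le_of_le (ν₁' + ν₂') (iInf_le _ hmass))).trans ?_
  calc ENNReal.ofReal a * (tvMass (μ₁ + μ₂) (μ₁' + μ₂') + tvMass (ν₁ + ν₂) (ν₁' + ν₂'))
        + ENNReal.ofReal b * W1 (μ₁' + μ₂') (ν₁' + ν₂')
      ≤ ENNReal.ofReal a * ((tvMass μ₁ μ₁' + tvMass μ₂ μ₂') + (tvMass ν₁ ν₁' + tvMass ν₂ ν₂'))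
        + ENNReal.ofReal b * (W1 μ₁' ν₁' + W1 μ₂' ν₂') := by
        gcongr
        · exact tvMass_add_le _ _ _ _
        · exact tvMass_add_le _ _ _ _
        · exact W1_add_le _ _ _ _
    _ = _ := by ring

theorem stmt3_general {d : ℕ} (a b : ℝ)
    (mu1 mu2 nu1 nu2 : Measure (Euc d)) :
    genW a b (mu1 + mu2) (nu1 + nu2) ≤ genW a b mu1 nu1 + genW a b mu2 nu2 :=
  genW_add_le a b mu1 mu2 nu1 nu2

/-- subadditivity of the generalized Wasserstein distance. -/
theorem stmt3 {d : ℕ} (a b : ℝ) (ha : 0 < a) (hb : 0 < b)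
    (mu1 mu2 nu1 nu2 : Measure (Euc d))
    [IsFiniteMeasure mu1] [IsFiniteMeasure mu2]
    [IsFiniteMeasure nu1] [IsFiniteMeasure nu2] :
    genW a b (mu1 + mu2) (nu1 + nu2) ≤ genW a b mu1 nu1 + genW a b mu2 nu2 :=
  stmt3_general a b mu1 mu2 nu1 nu2
end

section
/- For λ > 0, the generalized Wasserstein distance satisfies the dilation identity W₁^{a,b}(D_λ#μ, D_λ#ν) = W₁^{a,λb}(μ, ν), where D_λ(x) = λx is the dilation map on ℝ^d. -/
open MeasureTheory ENNReal Filter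

/-!
A measurable bijection preserves the total-variation mass `|μ - ν|`, since pushing forward along
it is an order isomorphism of measures and hence commutes with `⊓`; an equivalence multiplying
all distances by `K` multiplies every transport cost by `K`. Pushing competitors forward along
`D_λ` and back along `D_{1/λ}` gives the two inequalities.
-/

open scoped NNReal

namespace MeasurableEquiv

variable {X Y : Type*} [MeasurableSpace X] [MeasurableSpace Y]

noncomputable def mapOrderIso (e : X ≃ᵐ Y) : Measure X ≃o Measure Y where
  toFun := Measure.map e
  invFun := Measure.map e.symm
  left_inv _ := e.map_symm_map
  right_inv _ := e.map_map_symm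
  map_rel_iff' {μ ν} :=
    ⟨fun h => by simpa using Measure.map_mono h e.symm.measurable,
      fun h => Measure.map_mono h e.measurable⟩

end MeasurableEquiv

lemma tvMass_map_measurableEquiv {X Y : Type*} [MeasurableSpace X] [MeasurableSpace Y]
    (e : X ≃ᵐ Y) (μ ν : Measure X) :
    tvMass (μ.map e) (ν.map e) = tvMass μ ν := by
  have hinf : (μ ⊓ ν).map e = μ.map e ⊓ ν.map e := e.mapOrderIso.map_inf μ ν
  simp only [tvMass, ← hinf, e.map_apply, Set.preimage_univ]

section PushForward

variable {X Y : Type*} [MeasurableSpace X] [MetricSpace X] [MeasurableSpace Y] [MetricSpace Y]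

lemma W1_map_le_of_lipschitzWith {f : X → Y} {K : ℝ≥0} (hK : K ≠ 0) (hf : LipschitzWith K f)
    (hfm : Measurable f) (μ ν : Measure X) :
    W1 (μ.map f) (ν.map f) ≤ K * W1 μ ν := by
  have hK' : (K : ℝ≥0∞) ≠ 0 := by exact_mod_cast hK
  rw [W1, W1, ENNReal.mul_iInf_of_ne hK' ENNReal.coe_ne_top]
  refine le_iInf fun π => ?_
  rw [ENNReal.mul_iInf_of_ne hK' ENNReal.coe_ne_top]
  refine le_iInf fun ⟨hπ₁, hπ₂⟩ => ?_
  have hff : Measurable (Prod.map f f) := hfm.prodMap hfm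
  refine iInf₂_le_of_le (π.map (Prod.map f f)) ⟨?_, ?_⟩ ?_
  · rw [Measure.map_map measurable_fst hff, ← hπ₁, Measure.map_map hfm measurable_fst]
    rfl
  · rw [Measure.map_map measurable_snd hff, ← hπ₂, Measure.map_map hfm measurable_snd]
    rfl
  · calc ∫⁻ p, edist p.1 p.2 ∂π.map (Prod.map f f)
        ≤ ∫⁻ p, edist (f p.1) (f p.2) ∂π := lintegral_map_le _ _
      _ ≤ ∫⁻ p, K * edist p.1 p.2 ∂π := lintegral_mono fun p => hf p.1 p.2
      _ = K * ∫⁻ p, edist p.1 p.2 ∂π := lintegral_const_mul' _ _ ENNReal.coe_ne_top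

lemma genW_map_le_of_lipschitzWith (e : X ≃ᵐ Y) {K : ℝ≥0} (hK : K ≠ 0)
    (he : LipschitzWith K e) (a b : ℝ) (μ ν : Measure X) :
    genW a b (μ.map e) (ν.map e) ≤ genW a (K * b) μ ν := by
  refine le_iInf₂ fun μ' ν' => le_iInf fun hmass => ?_
  refine iInf₂_le_of_le (μ'.map e) (ν'.map e) (iInf_le_of_le (by simp [e.map_apply, hmass]) ?_)
  rw [tvMass_map_measurableEquiv, tvMass_map_measurableEquiv, ENNReal.ofReal_mul K.coe_nonneg,
    ENNReal.ofReal_coe_nnreal, mul_assoc, mul_left_comm]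
  gcongr
  exact W1_map_le_of_lipschitzWith hK he e.measurable μ' ν'

lemma genW_map_eq_of_edist_eq (e : X ≃ᵐ Y) {K : ℝ≥0} (hK : K ≠ 0)
    (he : ∀ x y, edist (e x) (e y) = K * edist x y) (a b : ℝ) (μ ν : Measure X) :
    genW a b (μ.map e) (ν.map e) = genW a (K * b) μ ν := by
  have hsymm : LipschitzWith K⁻¹ e.symm := fun x y => by
    rw [ENNReal.coe_inv hK, ← e.apply_symm_apply x, ← e.apply_symm_apply y, he,
      e.symm_apply_apply, e.symm_apply_apply,
      ENNReal.inv_mul_cancel_left (by exact_mod_cast hK) ENNReal.coe_ne_top]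
  refine le_antisymm (genW_map_le_of_lipschitzWith e hK (fun x y => (he x y).le) a b μ ν) ?_
  simpa [hK] using genW_map_le_of_lipschitzWith e.symm (inv_ne_zero hK) hsymm a (K * b)
    (μ.map e) (ν.map e)

end PushForward

theorem stmt5_general {d : ℕ} (a b lam : ℝ) (hlam : 0 < lam)
    (μ ν : Measure (Euc d)) :
    genW a b (μ.map (fun x => lam • x)) (ν.map (fun x => lam • x))
      = genW a (lam * b) μ ν := by
  have h := genW_map_eq_of_edist_eq (MeasurableEquiv.smul₀ lam hlam.ne') (K := ‖lam‖₊)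
    (by simpa using hlam.ne') (fun x y => edist_smul₀ lam x y) a b μ ν
  simpa [Real.norm_of_nonneg hlam.le] using h

/-- dilation identity `W₁^{a,b}(D_λ#μ, D_λ#ν) = W₁^{a,λb}(μ,ν)`. -/
theorem stmt5 {d : ℕ} (a b lam : ℝ) (ha : 0 < a) (hb : 0 < b) (hlam : 0 < lam)
    (μ ν : Measure (Euc d)) [IsFiniteMeasure μ] [IsFiniteMeasure ν] :
    genW a b (μ.map (fun x => lam • x)) (ν.map (fun x => lam • x))
      = genW a (lam * b) μ ν :=
  stmt5_general a b lam hlam μ ν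
end

section
/- The sequence of signed measures ν_n = δ_n − δ_{n+1/n} on ℝ satisfies ‖ν_n‖^{a,b} → 0 as n → ∞ (indeed ‖ν_n‖^{a,b} = b/n for n large), yet the sequence (ν_n) is not tight (the Jordan positive parts escape to infinity). -/
/-!
For `x ≠ y` the Jordan parts of `δ_x - δ_y` are `δ_x` and `δ_y`, so `‖δ_x - δ_y‖^{a,b}` is the
generalized Wasserstein distance between two Dirac masses. Transporting `δ_x` onto `δ_y` costs
`b |x - y|`. Conversely, the test function `φ = min (b d(·, y)) (b d(x, y))` is `b`-Lipschitz, so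
transport between `μ'` and `ν'` moves `∫ φ` by at most `b W₁(μ', ν')`; it is bounded by `2a`, so
creating or deleting mass moves `∫ φ` by at most `2a` per unit, which is exactly what `a · tvMass`
pays once the mass balance `μ'(X) = ν'(X)` is used. Since `φ(x) - φ(y) = b d(x, y)`, this gives
the lower bound when `b d(x, y) ≤ 2a`, and hence `‖ν_n‖^{a,b} = b/n` for large `n`. The positive
parts `δ_n` nevertheless leave every compact set.
-/

open MeasureTheory ENNReal Filter

section Transport

variable {X : Type*} [MeasurableSpace X]

lemma lintegral_le_mul_sub_inf_add {c : ℝ≥0∞} {φ : X → ℝ≥0∞} (hφ : ∀ u, φ u ≤ c)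
    (ρ τ : Measure X) [IsFiniteMeasure (ρ ⊓ τ)] :
    ∫⁻ u, φ u ∂ρ ≤ c * (ρ Set.univ - (ρ ⊓ τ) Set.univ) + ∫⁻ u, φ u ∂τ := by
  calc ∫⁻ u, φ u ∂ρ = ∫⁻ u, φ u ∂(ρ - ρ ⊓ τ) + ∫⁻ u, φ u ∂(ρ ⊓ τ) := by
        rw [← lintegral_add_measure, Measure.sub_add_cancel_of_le inf_le_left]
    _ ≤ ∫⁻ _, c ∂(ρ - ρ ⊓ τ) + ∫⁻ u, φ u ∂τ :=
        add_le_add (lintegral_mono hφ) (lintegral_mono' inf_le_right le_rfl)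
    _ = c * (ρ Set.univ - (ρ ⊓ τ) Set.univ) + ∫⁻ u, φ u ∂τ := by
        rw [lintegral_const, Measure.sub_apply MeasurableSet.univ inf_le_left]

lemma tvMass_self (μ : Measure X) : tvMass μ μ = 0 := by
  simp [tvMass, two_mul]

lemma tvMass_eq_sub_inf_add_sub_inf (ρ τ : Measure X) [IsFiniteMeasure (ρ ⊓ τ)] :
    tvMass ρ τ = (ρ Set.univ - (ρ ⊓ τ) Set.univ) + (τ Set.univ - (ρ ⊓ τ) Set.univ) := by
  have hfin : AddLECancellable ((ρ ⊓ τ) Set.univ) := ENNReal.cancel_of_ne (measure_ne_top _ _)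
  rw [tvMass, two_mul, hfin.tsub_add_tsub_comm hfin (inf_le_left (a := ρ) Set.univ)
    (inf_le_right (b := τ) Set.univ)]

variable [MetricSpace X]

lemma W1_dirac_le [OpensMeasurableSpace X] [SecondCountableTopology X] (x y : X) :
    W1 (Measure.dirac x) (Measure.dirac y) ≤ edist x y := by
  refine iInf₂_le_of_le (Measure.dirac (x, y)) ⟨?_, ?_⟩
    (by rw [lintegral_dirac' _ measurable_edist])
  · rw [Measure.map_dirac' measurable_fst]
  · rw [Measure.map_dirac' measurable_snd]

lemma lintegral_le_add_mul_W1 {L : ℝ≥0∞} (hL₀ : L ≠ 0) (hL : L ≠ ⊤) {φ : X → ℝ≥0∞}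
    (hφm : Measurable φ) (hφ : ∀ u v, φ u ≤ φ v + L * edist u v) (μ ν : Measure X) :
    ∫⁻ u, φ u ∂μ ≤ ∫⁻ u, φ u ∂ν + L * W1 μ ν := by
  simp_rw [W1, ENNReal.mul_iInf_of_ne hL₀ hL, ENNReal.add_iInf]
  refine le_iInf₂ fun π hπ => ?_
  calc ∫⁻ u, φ u ∂μ = ∫⁻ p, φ p.1 ∂π := by rw [← hπ.1, lintegral_map hφm measurable_fst]
    _ ≤ ∫⁻ p, (φ p.2 + L * edist p.1 p.2) ∂π := lintegral_mono fun p => hφ p.1 p.2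
    _ = ∫⁻ u, φ u ∂ν + L * ∫⁻ p, edist p.1 p.2 ∂π := by
        rw [lintegral_add_left (f := fun p : X × X => φ p.2) (hφm.comp measurable_snd),
          lintegral_const_mul' _ _ hL, ← hπ.2, lintegral_map hφm measurable_snd]

lemma genW_dirac_le [OpensMeasurableSpace X] [SecondCountableTopology X] (a : ℝ) {b : ℝ}
    (hb : 0 ≤ b) (x y : X) :
    genW a b (Measure.dirac x) (Measure.dirac y) ≤ ENNReal.ofReal (b * dist x y) := by
  calc genW a b (Measure.dirac x) (Measure.dirac y)
      ≤ ENNReal.ofReal a * (tvMass (Measure.dirac x) (Measure.dirac x)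
          + tvMass (Measure.dirac y) (Measure.dirac y))
        + ENNReal.ofReal b * W1 (Measure.dirac x) (Measure.dirac y) :=
        iInf₂_le_of_le (Measure.dirac x) (Measure.dirac y) (iInf_le_of_le (by simp) le_rfl)
    _ ≤ ENNReal.ofReal b * edist x y := by
        simpa [tvMass_self] using mul_le_mul_right (W1_dirac_le x y) _
    _ = ENNReal.ofReal (b * dist x y) := by rw [edist_dist, ENNReal.ofReal_mul hb]

lemma genW_dirac_ge [OpensMeasurableSpace X] {a b : ℝ} (hb : 0 < b) {x y : X}
    (hxy : b * dist x y ≤ 2 * a) :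
    ENNReal.ofReal (b * dist x y) ≤ genW a b (Measure.dirac x) (Measure.dirac y) := by
  refine le_iInf₂ fun μ' ν' => le_iInf fun hM => ?_
  set L := ENNReal.ofReal b
  set c := ENNReal.ofReal (2 * a)
  set m := ENNReal.ofReal (b * dist x y)
  set φ : X → ℝ≥0∞ := fun u => min (L * edist u y) m
  have hφm : Measurable φ := ((measurable_edist_left.const_mul _).min measurable_const)
  have hφc : ∀ u, φ u ≤ c := fun u => (min_le_right _ _).trans (ENNReal.ofReal_le_ofReal hxy)
  have hφlip : ∀ u v, φ u ≤ φ v + L * edist u v := by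
    intro u v
    have h : L * edist u y ≤ L * edist v y + L * edist u v := by
      rw [← mul_add, add_comm]; gcongr; exact edist_triangle u v y
    rw [← min_add_add_right]
    exact le_min ((min_le_left _ _).trans h) ((min_le_right _ _).trans le_self_add)
  have hφx : φ x = m := by simp [φ, m, L, edist_dist, ← ENNReal.ofReal_mul hb.le]
  have hφy : φ y = 0 := by simp [φ]
  have : IsFiniteMeasure (Measure.dirac x ⊓ μ') := isFiniteMeasure_of_le _ inf_le_left
  have : IsFiniteMeasure (ν' ⊓ Measure.dirac y) := isFiniteMeasure_of_le _ inf_le_right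
  have : IsFiniteMeasure (Measure.dirac y ⊓ ν') := isFiniteMeasure_of_le _ inf_le_left
  set s := (Measure.dirac x ⊓ μ') Set.univ
  set t := (ν' ⊓ Measure.dirac y) Set.univ
  set M := μ' Set.univ
  have hs₁ : s ≤ 1 := by simpa using (inf_le_left (a := Measure.dirac x) (b := μ')) Set.univ
  have hsM : s ≤ M := (inf_le_right (a := Measure.dirac x) (b := μ')) Set.univ
  have ht₁ : t ≤ 1 := by simpa using (inf_le_right (a := ν') (b := Measure.dirac y)) Set.univ
  have htM : t ≤ M := hM ▸ (inf_le_left (a := ν') (b := Measure.dirac y)) Set.univ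
  have hbalance : (1 - s) + (M - t) = (M - s) + (1 - t) := by
    have hs := ENNReal.cancel_of_ne (ne_top_of_le_ne_top one_ne_top hs₁)
    have ht := ENNReal.cancel_of_ne (ne_top_of_le_ne_top one_ne_top ht₁)
    rw [hs.tsub_add_tsub_comm ht hs₁ htM, hs.tsub_add_tsub_comm ht hsM ht₁, add_comm]
  calc m = ∫⁻ u, φ u ∂Measure.dirac x := by rw [lintegral_dirac' x hφm, hφx]
    _ ≤ c * (1 - s) + ∫⁻ u, φ u ∂μ' := by
        simpa using lintegral_le_mul_sub_inf_add hφc (Measure.dirac x) μ'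
    _ ≤ c * (1 - s) + (∫⁻ u, φ u ∂ν' + L * W1 μ' ν') := by
        gcongr
        exact lintegral_le_add_mul_W1 (by simpa [L] using hb) ofReal_ne_top hφm hφlip μ' ν'
    _ ≤ c * (1 - s) + (c * (M - t) + L * W1 μ' ν') := by
        gcongr
        simpa [hM, lintegral_dirac' y hφm, hφy] using
          lintegral_le_mul_sub_inf_add hφc ν' (Measure.dirac y)
    _ = ENNReal.ofReal a * (((1 - s) + (M - t)) + ((M - s) + (1 - t))) + L * W1 μ' ν' := by
        have hc : c = 2 * ENNReal.ofReal a := by simp [c, ENNReal.ofReal_mul zero_le_two]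
        rw [← hbalance, hc]
        ring
    _ = ENNReal.ofReal a * (tvMass (Measure.dirac x) μ' + tvMass (Measure.dirac y) ν')
        + L * W1 μ' ν' := by
        rw [tvMass_eq_sub_inf_add_sub_inf, tvMass_eq_sub_inf_add_sub_inf,
          inf_comm (Measure.dirac y) ν', ← hM]
        simp only [measure_univ]
        ring

lemma genW_dirac_eq [OpensMeasurableSpace X] [SecondCountableTopology X] {a b : ℝ} (hb : 0 < b)
    {x y : X} (hxy : b * dist x y ≤ 2 * a) :
    genW a b (Measure.dirac x) (Measure.dirac y) = ENNReal.ofReal (b * dist x y) :=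
  (genW_dirac_le a hb.le x y).antisymm (genW_dirac_ge hb hxy)

end Transport

section Jordan

variable {X : Type*} [MeasurableSpace X] [MeasurableSingletonClass X] {x y : X}

lemma dirac_mutuallySingular_dirac (hxy : x ≠ y) : Measure.dirac x ⟂ₘ Measure.dirac y :=
  ⟨{y}, measurableSet_singleton y, by simp [hxy], by simp⟩

lemma toJordanDecomposition_dirac_sub_dirac (hxy : x ≠ y) :
    ((Measure.dirac x).toSignedMeasure - (Measure.dirac y).toSignedMeasure).toJordanDecomposition
      = ⟨Measure.dirac x, Measure.dirac y, dirac_mutuallySingular_dirac hxy⟩ :=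
  SignedMeasure.toJordanDecomposition_eq rfl

lemma sNorm_dirac_sub_dirac [MetricSpace X] (a b : ℝ) (hxy : x ≠ y) :
    sNorm a b ((Measure.dirac x).toSignedMeasure - (Measure.dirac y).toSignedMeasure)
      = genW a b (Measure.dirac x) (Measure.dirac y) := by
  rw [sNorm, toJordanDecomposition_dirac_sub_dirac hxy]

end Jordan

/-- `ν_n = δ_n - δ_{n+1/n}` satisfies `‖ν_n‖^{a,b} = b/n` for large
`n`, hence `‖ν_n‖^{a,b} → 0`, yet the sequence is not tight. -/
theorem stmt13 (a b : ℝ) (ha : 0 < a) (hb : 0 < b) :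
    let νseq : ℕ → SignedMeasure ℝ := fun n =>
      (Measure.dirac (n : ℝ)).toSignedMeasure -
      (Measure.dirac ((n : ℝ) + 1 / (n : ℝ))).toSignedMeasure
    (∀ᶠ n in atTop, sNorm a b (νseq n) = ENNReal.ofReal (b / (n : ℝ))) ∧
    Tendsto (fun n => sNorm a b (νseq n)) atTop (nhds 0) ∧
    ¬ (∀ ε : ℝ, 0 < ε → ∃ K : Set ℝ, IsCompact K ∧
        (∀ n, (νseq n).toJordanDecomposition.posPart Kᶜ < ENNReal.ofReal ε) ∧
        (∀ n, (νseq n).toJordanDecomposition.negPart Kᶜ < ENNReal.ofReal ε)) := by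
  intro νseq
  have hne : ∀ n : ℕ, 1 ≤ n → (n : ℝ) ≠ n + 1 / n := fun n hn h => by
    have : (0 : ℝ) < 1 / n := by positivity
    linarith
  have hnorm : ∀ᶠ n in atTop, sNorm a b (νseq n) = ENNReal.ofReal (b / (n : ℝ)) := by
    filter_upwards [eventually_ge_atTop 1,
      tendsto_natCast_atTop_atTop.eventually_ge_atTop (b / (2 * a))] with n hn hbn
    have hdist : dist (n : ℝ) (n + 1 / n) = 1 / n := by
      rw [dist_self_add_right, Real.norm_of_nonneg (by positivity)]
    have hsmall : b * dist (n : ℝ) (n + 1 / n) ≤ 2 * a := by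
      rw [hdist, mul_one_div, div_le_iff₀ (by positivity)]
      rwa [div_le_iff₀ (by positivity), mul_comm] at hbn
    rw [sNorm_dirac_sub_dirac a b (hne n hn), genW_dirac_eq hb hsmall, hdist, mul_one_div]
  refine ⟨hnorm, ?_, fun htight => ?_⟩
  · refine (tendsto_congr' hnorm).2 ?_
    simpa using ENNReal.tendsto_ofReal (tendsto_const_div_atTop_nhds_zero_nat b)
  · obtain ⟨K, hK, hpos, -⟩ := htight 1 one_pos
    obtain ⟨u, hu⟩ := hK.bddAbove
    obtain ⟨n, hn, hun⟩ := ((eventually_ge_atTop 1).and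
      (tendsto_natCast_atTop_atTop.eventually_gt_atTop u)).exists
    have hnK : (n : ℝ) ∈ Kᶜ := fun hnK => (hu hnK).not_gt hun
    have := hpos n
    rw [toJordanDecomposition_dirac_sub_dirac (hne n hn), Measure.dirac_apply_of_mem hnK] at this
    simp at this
end

section
/- If μ_n is a sequence of finite signed Radon measures with ‖μ_n‖^{a,b} → 0, then the difference of masses of the Jordan parts vanishes: |μ_n⁺|(ℝ^d) − |μ_n⁻|(ℝ^d) → 0, i.e. μ_n(ℝ^d) → 0. -/
open MeasureTheory ENNReal Filter

/-!
Any competitor `(μ', ν')` in `W₁^{a,b}(μ⁺, μ⁻)` has `|μ'| = |ν'| = s`, and the total-variation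
terms dominate the mass defects: `|μ⁺ - μ'| ≥ ||μ⁺| - s|` and `|μ⁻ - ν'| ≥ ||μ⁻| - s|`. By the
triangle inequality, `‖μ‖^{a,b} ≥ a · ||μ⁺| - |μ⁻||`, so the mass difference is squeezed to `0`.
-/

lemma ENNReal.toReal_tsub_add_tsub {p q : ℝ≥0∞} (hp : p ≠ ∞) (hq : q ≠ ∞) :
    ((p - q) + (q - p)).toReal = |p.toReal - q.toReal| := by
  rcases le_total p q with hpq | hqp
  · rw [tsub_eq_zero_of_le hpq, zero_add, ENNReal.toReal_sub_of_le hpq hq, abs_sub_comm,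
      abs_of_nonneg (sub_nonneg.mpr (ENNReal.toReal_mono hq hpq))]
  · rw [tsub_eq_zero_of_le hqp, add_zero, ENNReal.toReal_sub_of_le hqp hp,
      abs_of_nonneg (sub_nonneg.mpr (ENNReal.toReal_mono hp hqp))]

lemma tsub_add_tsub_le_tvMass {X : Type*} [MeasurableSpace X] (μ ν : Measure X)
    (hμ : μ Set.univ ≠ ∞) :
    (μ Set.univ - ν Set.univ) + (ν Set.univ - μ Set.univ) ≤ tvMass μ ν := by
  have hinf : (μ ⊓ ν) Set.univ ≤ μ Set.univ ⊓ ν Set.univ :=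
    le_inf (Measure.le_iff'.mp inf_le_left _) (Measure.le_iff'.mp inf_le_right _)
  refine le_trans ?_ (tsub_le_tsub_left (mul_le_mul_right hinf 2) _)
  rcases le_total (μ Set.univ) (ν Set.univ) with hle | hle
  · rw [inf_eq_left.mpr hle, tsub_eq_zero_of_le hle, zero_add, two_mul,
      tsub_add_eq_tsub_tsub, ENNReal.add_sub_cancel_left hμ]
  · rw [inf_eq_right.mpr hle, tsub_eq_zero_of_le hle, add_zero, two_mul,
      tsub_add_eq_tsub_tsub, ENNReal.add_sub_cancel_right (ne_top_of_le_ne_top hμ hle)]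

lemma ofReal_mul_tsub_add_tsub_le_genW {X : Type*} [MeasurableSpace X] [MetricSpace X]
    (a b : ℝ) (μ ν : Measure X) (hμ : μ Set.univ ≠ ∞) (hν : ν Set.univ ≠ ∞) :
    ENNReal.ofReal a * ((μ Set.univ - ν Set.univ) + (ν Set.univ - μ Set.univ))
      ≤ genW a b μ ν := by
  refine le_iInf fun μ' => le_iInf fun ν' => le_iInf fun hmass => le_add_right ?_
  gcongr ENNReal.ofReal a * ?_
  set x := μ Set.univ
  set y := ν Set.univ
  set s := μ' Set.univ
  calc x - y + (y - x) ≤ ((x - s) + (s - y)) + ((y - s) + (s - x)) :=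
        add_le_add tsub_le_tsub_add_tsub tsub_le_tsub_add_tsub
    _ = (x - s + (s - x)) + (y - s + (s - y)) := by ring
    _ ≤ tvMass μ μ' + tvMass ν ν' :=
        add_le_add (tsub_add_tsub_le_tvMass μ μ' hμ) (hmass ▸ tsub_add_tsub_le_tvMass ν ν' hν)

theorem stmt15_general {d : ℕ} (a b : ℝ) (ha : 0 < a)
    (μ : ℕ → SignedMeasure (Euc d))
    (h : Tendsto (fun n => sNorm a b (μ n)) atTop (nhds 0)) :
    Tendsto (fun n =>
      ((μ n).toJordanDecomposition.posPart Set.univ).toReal -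
      ((μ n).toJordanDecomposition.negPart Set.univ).toReal) atTop (nhds 0) := by
  set f := fun n => (μ n).toJordanDecomposition.posPart Set.univ
  set g := fun n => (μ n).toJordanDecomposition.negPart Set.univ
  have ha' : ENNReal.ofReal a ≠ 0 := ENNReal.ofReal_ne_zero_iff.mpr ha
  have hbound : ∀ n, (f n - g n) + (g n - f n) ≤ sNorm a b (μ n) / ENNReal.ofReal a := by
    intro n
    rw [ENNReal.le_div_iff_mul_le (Or.inl ha') (Or.inl ENNReal.ofReal_ne_top), mul_comm]
    exact ofReal_mul_tsub_add_tsub_le_genW a b _ _ (measure_ne_top _ _) (measure_ne_top _ _)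
  have hdiv : Tendsto (fun n => sNorm a b (μ n) / ENNReal.ofReal a) atTop (nhds 0) := by
    simpa using ENNReal.Tendsto.div_const h (Or.inr ha')
  have hsymm : Tendsto (fun n => (f n - g n) + (g n - f n)) atTop (nhds 0) :=
    tendsto_of_tendsto_of_tendsto_of_le_of_le tendsto_const_nhds hdiv (fun _ => zero_le) hbound
  have hreal := (ENNReal.tendsto_toReal zero_ne_top).comp hsymm
  rw [ENNReal.toReal_zero] at hreal
  rw [tendsto_zero_iff_abs_tendsto_zero]
  exact hreal.congr fun n => ENNReal.toReal_tsub_add_tsub (measure_ne_top _ _) (measure_ne_top _ _)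

/-- if `‖μ_n‖^{a,b} → 0` then `|μ_n⁺|(ℝ^d) - |μ_n⁻|(ℝ^d) → 0`. -/
theorem stmt15 {d : ℕ} (a b : ℝ) (ha : 0 < a) (hb : 0 < b)
    (μ : ℕ → SignedMeasure (Euc d))
    (h : Tendsto (fun n => sNorm a b (μ n)) atTop (nhds 0)) :
    Tendsto (fun n =>
      ((μ n).toJordanDecomposition.posPart Set.univ).toReal -
      ((μ n).toJordanDecomposition.negPart Set.univ).toReal) atTop (nhds 0) :=
  stmt15_general a b ha μ h
end
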